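/- Let 𝒜 : ℝ^{m×n} → ℝ^p be a linear map satisfying the R-RIP at rank r+ℓ with constant δ₁ ∈ (0,1) and at rank 2r with constant δ₂ ∈ (0,1), where ℓ ≥ r. Set L = 2(1+δ₁) and M = 2(1−δ₂). Let X_i, X★, X̃ ∈ ℝ^{m×n} with rank(X_i) ≤ r, rank(X★) ≤ r, rank(X̃) ≤ ℓ, and let ϵ ≥ 0 be such that ‖X̃ − (X_i − (1/L)∇f(X_i))‖_F² ≤ (1+ϵ)‖X★ − (X_i − (1/L)∇f(X_i))‖_F². Then f(X̃) ≤ (1+ϵ)·[f(X★) + ((L−M)/2)‖X★ − X_i‖_F²] + (ϵ/(2L))‖∇f(X_i)‖_F². -/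
import Mathlib
set_option maxHeartbeats 1000000

open scoped BigOperators

/-- Squared Frobenius norm of a real matrix. -/
noncomputable def frobSq {m n : ℕ} (X : Matrix (Fin m) (Fin n) ℝ) : ℝ :=
  ∑ i, ∑ j, (X i j) ^ 2

/-- Frobenius norm of a real matrix. -/
noncomputable def frobNorm {m n : ℕ} (X : Matrix (Fin m) (Fin n) ℝ) : ℝ :=
  Real.sqrt (frobSq X)

/-- Frobenius inner product `⟨X, Y⟩ = tr(Xᵀ Y)`. -/
noncomputable def frobInner {m n : ℕ} (X Y : Matrix (Fin m) (Fin n) ℝ) : ℝ :=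
  ∑ i, ∑ j, X i j * Y i j

/-- Squared Euclidean norm on `ℝ^p`. -/
noncomputable def vecNormSq {p : ℕ} (v : Fin p → ℝ) : ℝ := ∑ i, (v i) ^ 2

/-- Euclidean norm on `ℝ^p`. -/
noncomputable def vecNorm {p : ℕ} (v : Fin p → ℝ) : ℝ := Real.sqrt (vecNormSq v)

/-- Euclidean inner product on `ℝ^p`. -/
noncomputable def dotp {p : ℕ} (v w : Fin p → ℝ) : ℝ := ∑ i, v i * w i

/-- Rank restricted isometry property (R-RIP) at rank `s` with constant `δ`. -/
def RIP {m n p : ℕ} (A : Matrix (Fin m) (Fin n) ℝ →ₗ[ℝ] (Fin p → ℝ)) (s : ℕ) (δ : ℝ) : Prop :=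
  ∀ X : Matrix (Fin m) (Fin n) ℝ, X.rank ≤ s →
    (1 - δ) * frobSq X ≤ vecNormSq (A X) ∧ vecNormSq (A X) ≤ (1 + δ) * frobSq X

/-- The data error `f(X) = ‖y - 𝒜 X‖₂²`. -/
noncomputable def dataErr {m n p : ℕ} (A : Matrix (Fin m) (Fin n) ℝ →ₗ[ℝ] (Fin p → ℝ))
    (y : Fin p → ℝ) (X : Matrix (Fin m) (Fin n) ℝ) : ℝ :=
  vecNormSq (y - A X)

/-- `Aadj` is the adjoint of `A` with respect to the Frobenius and Euclidean inner products. -/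
def IsAdjoint {m n p : ℕ} (A : Matrix (Fin m) (Fin n) ℝ →ₗ[ℝ] (Fin p → ℝ))
    (Aadj : (Fin p → ℝ) →ₗ[ℝ] Matrix (Fin m) (Fin n) ℝ) : Prop :=
  ∀ (z : Fin p → ℝ) (X : Matrix (Fin m) (Fin n) ℝ), frobInner (Aadj z) X = dotp z (A X)

/-- The gradient `∇f(X) = 2 𝒜*(𝒜 X - y)` of the data error. -/
noncomputable def gradErr {m n p : ℕ} (A : Matrix (Fin m) (Fin n) ℝ →ₗ[ℝ] (Fin p → ℝ))
    (Aadj : (Fin p → ℝ) →ₗ[ℝ] Matrix (Fin m) (Fin n) ℝ) (y : Fin p → ℝ)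
    (X : Matrix (Fin m) (Fin n) ℝ) : Matrix (Fin m) (Fin n) ℝ :=
  (2 : ℝ) • Aadj (A X - y)

/- ### Auxiliary lemmas -/

lemma rank_sub_le' {m n : ℕ} (X Y : Matrix (Fin m) (Fin n) ℝ) :
    (X - Y).rank ≤ X.rank + Y.rank := by
  have h : LinearMap.range (X - Y).mulVecLin ≤
      LinearMap.range X.mulVecLin ⊔ LinearMap.range Y.mulVecLin := by
    rintro v ⟨u, rfl⟩
    have : (X - Y).mulVecLin u = X.mulVecLin u - Y.mulVecLin u := by
      simp [Matrix.mulVecLin_apply, Matrix.sub_mulVec]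
    rw [this]
    exact Submodule.sub_mem _ (Submodule.mem_sup_left ⟨u, rfl⟩)
      (Submodule.mem_sup_right ⟨u, rfl⟩)
  calc (X - Y).rank ≤ Module.finrank ℝ
        ((LinearMap.range X.mulVecLin ⊔ LinearMap.range Y.mulVecLin :
          Submodule ℝ (Fin m → ℝ))) := Submodule.finrank_mono h
    _ ≤ X.rank + Y.rank := Submodule.finrank_add_le_finrank_add_finrank _ _

lemma vecNormSq_sub' {p : ℕ} (u v : Fin p → ℝ) :
    vecNormSq (u - v) = vecNormSq u - 2 * dotp u v + vecNormSq v := by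
  have h : ∀ i, (u i - v i)^2 = u i^2 - 2*(u i * v i) + v i^2 := fun i => by ring
  simp only [vecNormSq, dotp, Pi.sub_apply]
  simp_rw [h, Finset.sum_add_distrib, Finset.sum_sub_distrib, Finset.mul_sum]

lemma frobSq_add_smul' {m n : ℕ} (D G : Matrix (Fin m) (Fin n) ℝ) (c : ℝ) :
    frobSq (D + c • G) = frobSq D + 2*c*frobInner D G + c^2*frobSq G := by
  have h : ∀ (i : Fin m) (j : Fin n), (D i j + c * G i j)^2
      = D i j^2 + 2*c*(D i j * G i j) + c^2 * G i j^2 := fun i j => by ring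
  simp only [frobSq, frobInner, Matrix.add_apply, Matrix.smul_apply, smul_eq_mul]
  simp_rw [h, Finset.sum_add_distrib, Finset.mul_sum]

lemma frobInner_smul_left' {m n : ℕ} (c : ℝ) (X Y : Matrix (Fin m) (Fin n) ℝ) :
    frobInner (c • X) Y = c * frobInner X Y := by
  simp only [frobInner, Matrix.smul_apply, smul_eq_mul, Finset.mul_sum]
  simp_rw [mul_assoc]

lemma frobInner_comm' {m n : ℕ} (X Y : Matrix (Fin m) (Fin n) ℝ) :
    frobInner X Y = frobInner Y X := by
  simp only [frobInner]
  simp_rw [mul_comm]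

lemma dotp_neg_left' {p : ℕ} (u v : Fin p → ℝ) : dotp (-u) v = -dotp u v := by
  simp [dotp, Finset.sum_neg_distrib]

lemma vecNormSq_nonneg' {p : ℕ} (v : Fin p → ℝ) : 0 ≤ vecNormSq v :=
  Finset.sum_nonneg fun i _ => sq_nonneg _

lemma frobSq_nonneg' {m n : ℕ} (X : Matrix (Fin m) (Fin n) ℝ) : 0 ≤ frobSq X :=
  Finset.sum_nonneg fun i _ => Finset.sum_nonneg fun j _ => sq_nonneg _

/-- Inner product of the gradient with a direction. -/
lemma frobInner_grad' {m n p : ℕ} (A : Matrix (Fin m) (Fin n) ℝ →ₗ[ℝ] (Fin p → ℝ))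
    (Aadj : (Fin p → ℝ) →ₗ[ℝ] Matrix (Fin m) (Fin n) ℝ) (hAdj : IsAdjoint A Aadj)
    (y : Fin p → ℝ) (Xi D : Matrix (Fin m) (Fin n) ℝ) :
    frobInner (gradErr A Aadj y Xi) D = -2 * dotp (y - A Xi) (A D) := by
  rw [gradErr, frobInner_smul_left', hAdj]
  have : A Xi - y = -(y - A Xi) := by abel
  rw [this, dotp_neg_left']
  ring

/-- Quadratic expansion of the data error around `Xi`. -/
lemma dataErr_expand' {m n p : ℕ} (A : Matrix (Fin m) (Fin n) ℝ →ₗ[ℝ] (Fin p → ℝ))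
    (Aadj : (Fin p → ℝ) →ₗ[ℝ] Matrix (Fin m) (Fin n) ℝ) (hAdj : IsAdjoint A Aadj)
    (y : Fin p → ℝ) (Xi X : Matrix (Fin m) (Fin n) ℝ) :
    dataErr A y X = dataErr A y Xi + frobInner (gradErr A Aadj y Xi) (X - Xi)
      + vecNormSq (A (X - Xi)) := by
  have h1 : y - A X = (y - A Xi) - A (X - Xi) := by rw [map_sub]; abel
  rw [dataErr, h1, vecNormSq_sub', frobInner_grad' A Aadj hAdj, dataErr]
  ring

/-- One-step descent bound with approximate projection. If `𝒜` satisfies the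
R-RIP at rank `r+ℓ` with constant `δ₁ ∈ (0,1)` and at rank `2r` with constant `δ₂ ∈ (0,1)`,
`ℓ ≥ r`, `L = 2(1+δ₁)`, `M = 2(1-δ₂)`, `rank X_i ≤ r`, `rank X★ ≤ r`, `rank X̃ ≤ ℓ`, and
`‖X̃ - (X_i - (1/L)∇f(X_i))‖_F² ≤ (1+ϵ)‖X★ - (X_i - (1/L)∇f(X_i))‖_F²`, then
`f(X̃) ≤ (1+ϵ)[f(X★) + ((L-M)/2)‖X★ - X_i‖_F²] + (ϵ/(2L))‖∇f(X_i)‖_F²`. -/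
theorem stmt3 {m n p : ℕ} (A : Matrix (Fin m) (Fin n) ℝ →ₗ[ℝ] (Fin p → ℝ))
    (Aadj : (Fin p → ℝ) →ₗ[ℝ] Matrix (Fin m) (Fin n) ℝ) (hAdj : IsAdjoint A Aadj)
    (y : Fin p → ℝ) (r ℓ : ℕ) (hℓ : r ≤ ℓ)
    (δ₁ δ₂ : ℝ) (hδ₁0 : 0 < δ₁) (hδ₁1 : δ₁ < 1) (hδ₂0 : 0 < δ₂) (hδ₂1 : δ₂ < 1)
    (hRIP1 : RIP A (r + ℓ) δ₁) (hRIP2 : RIP A (2 * r) δ₂)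
    (L M : ℝ) (hL : L = 2 * (1 + δ₁)) (hM : M = 2 * (1 - δ₂))
    (Xi Xstar Xt : Matrix (Fin m) (Fin n) ℝ)
    (hXi : Xi.rank ≤ r) (hXstar : Xstar.rank ≤ r) (hXt : Xt.rank ≤ ℓ)
    (ε : ℝ) (hε : 0 ≤ ε)
    (happrox : frobSq (Xt - (Xi - (1 / L) • gradErr A Aadj y Xi)) ≤
      (1 + ε) * frobSq (Xstar - (Xi - (1 / L) • gradErr A Aadj y Xi))) :
    dataErr A y Xt ≤
      (1 + ε) * (dataErr A y Xstar + ((L - M) / 2) * frobSq (Xstar - Xi))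
        + (ε / (2 * L)) * frobSq (gradErr A Aadj y Xi) := by
  set G : Matrix (Fin m) (Fin n) ℝ := gradErr A Aadj y Xi with hG
  have hLpos : 0 < L := by rw [hL]; linarith
  have hLne : L ≠ 0 := ne_of_gt hLpos
  -- scalar abbreviations
  set fI := dataErr A y Xi with hfI
  set fS := dataErr A y Xstar with hfS
  set fT := dataErr A y Xt with hfT
  set a := frobSq (Xt - Xi) with ha
  set a' := frobSq (Xstar - Xi) with ha'
  set b := frobInner (Xt - Xi) G with hb
  set b' := frobInner (Xstar - Xi) G with hb'
  set qT := vecNormSq (A (Xt - Xi)) with hqT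
  set q' := vecNormSq (A (Xstar - Xi)) with hq'
  set g := frobSq G with hg
  -- expansions of the data error
  have h1 : fT = fI + frobInner G (Xt - Xi) + qT :=
    dataErr_expand' A Aadj hAdj y Xi Xt
  rw [frobInner_comm'] at h1
  have h2 : fS = fI + frobInner G (Xstar - Xi) + q' :=
    dataErr_expand' A Aadj hAdj y Xi Xstar
  rw [frobInner_comm'] at h2
  -- rewrite the approximation hypothesis
  have hvT : Xt - (Xi - (1 / L) • G) = (Xt - Xi) + (1/L) • G := by
    ext i j
    simp [Matrix.sub_apply, Matrix.add_apply, Matrix.smul_apply]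
    ring
  have hvS : Xstar - (Xi - (1 / L) • G) = (Xstar - Xi) + (1/L) • G := by
    ext i j
    simp [Matrix.sub_apply, Matrix.add_apply, Matrix.smul_apply]
    ring
  rw [hvT, hvS, frobSq_add_smul', frobSq_add_smul'] at happrox
  -- clear denominators in the approximation hypothesis
  have happ2 : L^2 * (a + 2*(1/L)*b + (1/L)^2*g) ≤
      L^2 * ((1 + ε) * (a' + 2*(1/L)*b' + (1/L)^2*g)) :=
    mul_le_mul_of_nonneg_left happrox (sq_nonneg L)
  have happ3 : L^2*a + 2*L*b + g ≤ (1 + ε) * (L^2*a' + 2*L*b' + g) := by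
    have e1 : L^2 * (a + 2*(1/L)*b + (1/L)^2*g) = L^2*a + 2*L*b + g := by
      field_simp
    have e2 : L^2 * ((1 + ε) * (a' + 2*(1/L)*b' + (1/L)^2*g))
        = (1 + ε) * (L^2*a' + 2*L*b' + g) := by
      field_simp
    rw [e1, e2] at happ2
    exact happ2
  -- RIP bounds
  have hrT : (Xt - Xi).rank ≤ r + ℓ := by
    have := rank_sub_le' Xt Xi
    omega
  have hrS : (Xstar - Xi).rank ≤ 2 * r := by
    have := rank_sub_le' Xstar Xi
    omega
  have h3 : qT ≤ (1 + δ₁) * a := (hRIP1 (Xt - Xi) hrT).2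
  have h3' : 2*L*qT ≤ L^2 * a := by
    have := mul_le_mul_of_nonneg_left h3 (le_of_lt (by linarith : (0:ℝ) < 2*L))
    calc 2*L*qT ≤ 2*L*((1 + δ₁)*a) := this
      _ = L^2 * a := by rw [hL]; ring
  have h4 : (M/2) * a' ≤ q' := by
    have := (hRIP2 (Xstar - Xi) hrS).1
    have hM2 : M/2 = 1 - δ₂ := by rw [hM]; ring
    rw [hM2]; exact this
  -- nonnegativity facts
  have hfI0 : 0 ≤ fI := vecNormSq_nonneg' _
  have hg0 : 0 ≤ g := frobSq_nonneg' _
  have h1ε : (0:ℝ) ≤ 1 + ε := by linarith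
  -- the scaled main inequality
  have H1 : 2*L*fT = 2*L*fI + 2*L*(frobInner (Xt - Xi) G) + 2*L*qT := by
    linear_combination (2*L) * h1
  have H2 : 2*L*(1+ε)*fS
      = 2*L*(1+ε)*fI + 2*L*(1+ε)*(frobInner (Xstar - Xi) G) + 2*L*(1+ε)*q' := by
    linear_combination (2*L*(1+ε)) * h2
  have T1 : 0 ≤ 2*L*ε*fI :=
    mul_nonneg (mul_nonneg (by linarith) hε) hfI0
  have T2 : 0 ≤ 2*L*(1+ε)*(q' - (M/2)*a') :=
    mul_nonneg (mul_nonneg (by linarith) h1ε) (sub_nonneg.mpr h4)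
  have key : 2*L*fT ≤ 2*L*((1 + ε)*(fS + ((L - M)/2) * a')) + ε*g := by
    nlinarith [H1, H2, T1, T2, happ3, h3']
  -- divide by 2L
  have hfinal : (1 + ε) * (fS + ((L - M) / 2) * a') + (ε / (2 * L)) * g
      = (2*L*((1 + ε)*(fS + ((L - M)/2) * a')) + ε*g) / (2*L) := by
    field_simp
  rw [hfinal, le_div_iff₀ (by linarith : (0:ℝ) < 2*L)]
  linarith [key]
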